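/- For every v ∈ 𝕍, the rational number val(v) lies in the closed interval [-1, 1], with val(v) = -1 only for v = [F] and val(v) = 1 only for v = [T]. -/

import Mathlib

/-- The three truth symbols F, 0 (Z), T. -/
inductive TSym : Type
  | F | Z | T
deriving DecidableEq

open TSym

/-- The operation u ≫ v on lists of symbols. -/
def lexOp (u v : List TSym) : List TSym :=
  if u = [F] ∧ v = [F] then [F]
  else if u = [T] ∧ v = [T] then [T]
  else Z :: (u ++ v)

/-- The truth domain 𝕍 as an inductive predicate. -/
inductive Vmem : List TSym → Prop
  | F : Vmem [F]
  | T : Vmem [T]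
  | op {u v : List TSym} : Vmem u → Vmem v → Vmem (lexOp u v)

def symRank : TSym → ℕ
  | F => 0 | Z => 1 | T => 2

/-- The order F < 0 < T on symbols. -/
def symLt (a b : TSym) : Prop := symRank a < symRank b

/-- Lexicographic order on lists induced by F < 0 < T. -/
def listLt (u v : List TSym) : Prop := List.Lex symLt u v

/-- Pointwise negation F ↦ T, T ↦ F, 0 ↦ 0. -/
def symNeg : TSym → TSym
  | F => T | T => F | Z => Z

def negList (v : List TSym) : List TSym := v.map symNeg

def symVal : TSym → ℚ
  | F => -1 | Z => 0 | T => 1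

/-- val([u₁,…,u_n]) = Σ symVal(u_i) · (1/3)^(i-1). -/
def val : List TSym → ℚ
  | [] => 0
  | a :: t => symVal a + val t / 3

open Classical in
/-- Lexicographic minimum. -/
noncomputable def minL (u v : List TSym) : List TSym := if listLt u v then u else v

open Classical in
/-- Lexicographic maximum. -/
noncomputable def maxL (u v : List TSym) : List TSym := if listLt u v then v else u


/-! Every list has `|val| ≤ 3/2` (geometric series), so a list headed by `0` has
`|val| ≤ 1/2`. An element of 𝕍 other than `[F]` and `[T]` is headed by `0`. -/

lemma abs_symVal_le_one (a : TSym) : |symVal a| ≤ 1 := by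
  cases a <;> norm_num [symVal]

lemma abs_val_le (l : List TSym) : |val l| ≤ 3 / 2 := by
  induction l with
  | nil => norm_num [val]
  | cons a t ih =>
    calc |val (a :: t)| = |symVal a + val t / 3| := rfl
      _ ≤ |symVal a| + |val t / 3| := abs_add_le _ _
      _ = |symVal a| + |val t| / 3 := by rw [abs_div, abs_of_pos (three_pos : (0 : ℚ) < 3)]
      _ ≤ 1 + (3 / 2) / 3 := by gcongr; exact abs_symVal_le_one a
      _ = 3 / 2 := by norm_num

lemma abs_val_Z_cons_le (l : List TSym) : |val (Z :: l)| ≤ 1 / 2 := by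
  have h := abs_val_le l
  rw [val, symVal, zero_add, abs_div, abs_of_pos (three_pos : (0 : ℚ) < 3)]
  linarith

lemma Vmem.eq_F_or_eq_T_or_exists_eq_Z_cons {v : List TSym} (hv : Vmem v) :
    v = [TSym.F] ∨ v = [TSym.T] ∨ ∃ l, v = Z :: l := by
  cases hv with
  | F => exact .inl rfl
  | T => exact .inr (.inl rfl)
  | @op u w _ _ =>
    unfold lexOp
    split_ifs
    exacts [.inl rfl, .inr (.inl rfl), .inr (.inr ⟨u ++ w, rfl⟩)]

open TSym in
theorem val_mem_Icc (v : List TSym) (hv : Vmem v) :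
    -1 ≤ val v ∧ val v ≤ 1 ∧ (val v = -1 → v = [F]) ∧ (val v = 1 → v = [T]) := by
  rcases hv.eq_F_or_eq_T_or_exists_eq_Z_cons with rfl | rfl | ⟨l, rfl⟩
  · norm_num [val, symVal]
  · norm_num [val, symVal]
  · have h := abs_le.mp (abs_val_Z_cons_le l)
    refine ⟨by linarith, by linarith, fun _ => ?_, fun _ => ?_⟩ <;> linarith
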